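/- For jointly distributed finite random variables U^N, Y^N, S_0, the directed information satisfies |I(U^N → Y^N) − I(U^N → Y^N | S_0)| ≤ log₂|S|, where S is the (finite) alphabet of S_0. -/

import Mathlib

open scoped Classical

noncomputable section

variable {Ω : Type*} [Fintype Ω]

/-- Probability that the random variable `f` (on finite sample space `Ω`
with mass function `μ`) takes value `a`. -/
def prob {α : Type*} (μ : Ω → ℝ) (f : Ω → α) (a : α) : ℝ :=
  ∑ ω : Ω, if f ω = a then μ ω else 0

/-- Shannon entropy (in bits) of the random variable `f`. -/
def ent {α : Type*} [Fintype α] (μ : Ω → ℝ) (f : Ω → α) : ℝ :=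
  ∑ a : α, -(prob μ f a * Real.logb 2 (prob μ f a))

/-- Conditional entropy `H(f | g)` in bits. -/
def condEnt {α β : Type*} [Fintype α] [Fintype β]
    (μ : Ω → ℝ) (f : Ω → α) (g : Ω → β) : ℝ :=
  ent μ (fun ω => (f ω, g ω)) - ent μ g

/-- Mutual information `I(f ; g)` in bits. -/
def mi {α β : Type*} [Fintype α] [Fintype β]
    (μ : Ω → ℝ) (f : Ω → α) (g : Ω → β) : ℝ :=
  ent μ f + ent μ g - ent μ (fun ω => (f ω, g ω))

/-- Conditional mutual information `I(f ; g | h)` in bits. -/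
def cmi {α β γ : Type*} [Fintype α] [Fintype β] [Fintype γ]
    (μ : Ω → ℝ) (f : Ω → α) (g : Ω → β) (h : Ω → γ) : ℝ :=
  condEnt μ f h - condEnt μ f (fun ω => (g ω, h ω))

/-- `f` and `g` are conditionally independent given `h`
(the Markov chain `f − h − g`). -/
def condIndep {α β γ : Type*} (μ : Ω → ℝ) (f : Ω → α) (g : Ω → β) (h : Ω → γ) : Prop :=
  ∀ a b c, prob μ (fun ω => (f ω, g ω, h ω)) (a, b, c) * prob μ h c =
    prob μ (fun ω => (f ω, h ω)) (a, c) * prob μ (fun ω => (g ω, h ω)) (b, c)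

end

noncomputable section

variable {Ω : Type*} [Fintype Ω]

/-- The prefix `Z^{i}` (inclusive) of a finite-horizon process `Z`, encoded as a
finite-valued random variable: coordinates beyond `i` are masked to `none`. -/
def prefixIncl {N : ℕ} {𝒵 : Type*} (Z : Ω → Fin N → 𝒵) (i : Fin N) :
    Ω → (Fin N → Option 𝒵) :=
  fun ω j => if j ≤ i then some (Z ω j) else none

/-- The strict prefix `Z^{i-1}` of a finite-horizon process `Z`. -/
def prefixLT {N : ℕ} {𝒵 : Type*} (Z : Ω → Fin N → 𝒵) (i : Fin N) :
    Ω → (Fin N → Option 𝒵) :=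
  fun ω j => if j < i then some (Z ω j) else none

/-- Directed information `I(U^N → Y^N) = Σ_{i=1}^N I(U^i; Y_i | Y^{i-1})`. -/
def dirInfo {N : ℕ} {𝒰 𝒴 : Type*} [Fintype 𝒰] [Fintype 𝒴]
    (μ : Ω → ℝ) (U : Ω → Fin N → 𝒰) (Y : Ω → Fin N → 𝒴) : ℝ :=
  ∑ i : Fin N, cmi μ (prefixIncl U i) (fun ω => Y ω i) (prefixLT Y i)

/-- Conditional directed information
`I(U^N → Y^N | S_0) = Σ_{i=1}^N I(U^i; Y_i | Y^{i-1}, S_0)`. -/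
def dirInfoCond {N : ℕ} {𝒰 𝒴 𝒮 : Type*} [Fintype 𝒰] [Fintype 𝒴] [Fintype 𝒮]
    (μ : Ω → ℝ) (U : Ω → Fin N → 𝒰) (Y : Ω → Fin N → 𝒴) (S₀ : Ω → 𝒮) : ℝ :=
  ∑ i : Fin N, cmi μ (prefixIncl U i) (fun ω => Y ω i)
    (fun ω => (prefixLT Y i ω, S₀ ω))

end

/-!
At each time `i`, expanding `I(U^i, S₀; Y_i | Y^{i-1})` by the chain rule in both orders gives
`I(U^i; Y_i | Y^{i-1}) - I(U^i; Y_i | Y^{i-1}, S₀) = I(S₀; Y_i | Y^{i-1}) - I(S₀; Y_i | U^i, Y^{i-1})`.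
Both sums over `i` on the right are nonnegative and at most `H(S₀)`: since conditioning reduces
entropy, the `i`-th terms are bounded by `H(S₀ | Y^{i-1}) - H(S₀ | Y^i)` and by
`H(S₀ | U^{i-1}, Y^{i-1}) - H(S₀ | U^i, Y^i)` respectively, and these telescope.
Finally `H(S₀) ≤ log₂ |𝒮|` by Gibbs' inequality.
-/

open Finset Real

lemma mul_logb_sub_logb_le {p r : ℝ} (hp : 0 ≤ p) (hr : 0 ≤ r) (hpr : 0 < p → 0 < r) :
    p * (logb 2 r - logb 2 p) ≤ (r - p) / log 2 := by
  rcases hp.eq_or_lt with rfl | hp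
  · simpa using div_nonneg hr (log_nonneg one_le_two)
  · have hr := hpr hp
    have hlog : log (r / p) ≤ r / p - 1 := log_le_sub_one_of_pos (div_pos hr hp)
    rw [← logb_div hr.ne' hp.ne', logb, mul_div_assoc', div_le_div_iff_of_pos_right
      (log_pos one_lt_two)]
    calc p * log (r / p) ≤ p * (r / p - 1) := mul_le_mul_of_nonneg_left hlog hp.le
      _ = r - p := by field_simp

lemma sum_mul_logb_le_sum_mul_logb {α : Type*} [Fintype α] {p r : α → ℝ} (hp : ∀ a, 0 ≤ p a)
    (hp1 : ∑ a, p a = 1) (hr : ∀ a, 0 ≤ r a) (hr1 : ∑ a, r a ≤ 1)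
    (hpr : ∀ a, 0 < p a → 0 < r a) :
    ∑ a, p a * logb 2 (r a) ≤ ∑ a, p a * logb 2 (p a) := by
  rw [← sub_nonpos, ← sum_sub_distrib]
  calc ∑ a, (p a * logb 2 (r a) - p a * logb 2 (p a))
      ≤ ∑ a, (r a - p a) / log 2 :=
        sum_le_sum fun a _ => by rw [← mul_sub]; exact mul_logb_sub_logb_le (hp a) (hr a) (hpr a)
    _ = ((∑ a, r a) - 1) / log 2 := by rw [← sum_div, sum_sub_distrib, hp1]
    _ ≤ 0 := div_nonpos_of_nonpos_of_nonneg (by linarith) (log_nonneg one_le_two)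

section Entropy

variable {Ω α β γ : Type*} [Fintype Ω] {μ : Ω → ℝ}

lemma prob_nonneg (hμ0 : ∀ ω, 0 ≤ μ ω) (f : Ω → α) (a : α) : 0 ≤ prob μ f a :=
  sum_nonneg fun ω _ => ite_nonneg (hμ0 ω) le_rfl

lemma sum_prob_mul [Fintype α] (f : Ω → α) (r : α → ℝ) :
    ∑ a, prob μ f a * r a = ∑ ω, μ ω * r (f ω) := by
  simp only [prob, sum_mul, ite_mul, zero_mul]
  rw [sum_comm]
  simp

lemma sum_prob (hμ1 : ∑ ω, μ ω = 1) [Fintype α] (f : Ω → α) : ∑ a, prob μ f a = 1 := by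
  simpa [hμ1] using sum_prob_mul (μ := μ) f 1

lemma le_prob_apply (hμ0 : ∀ ω, 0 ≤ μ ω) (f : Ω → α) (ω : Ω) : μ ω ≤ prob μ f (f ω) := by
  simpa [prob] using single_le_sum (fun ω' _ => ite_nonneg (hμ0 ω') le_rfl) (mem_univ ω)
    (f := fun ω' => if f ω' = f ω then μ ω' else 0)

lemma prob_le_prob_comp (hμ0 : ∀ ω, 0 ≤ μ ω) (f : Ω → α) (k : α → β) (a : α) :
    prob μ f a ≤ prob μ (fun ω => k (f ω)) (k a) :=
  sum_le_sum fun ω _ => by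
    by_cases h : f ω = a
    · simp [h]
    · rw [if_neg h]; exact ite_nonneg (hμ0 ω) le_rfl

lemma ent_eq_neg_sum [Fintype α] (f : Ω → α) :
    ent μ f = -∑ ω, μ ω * logb 2 (prob μ f (f ω)) := by
  rw [ent, sum_neg_distrib, sum_prob_mul f fun a => logb 2 (prob μ f a)]

lemma ent_eq_of_comp_of_comp [Fintype α] [Fintype β] {f : Ω → α} {g : Ω → β}
    (k : α → β) (k' : β → α) (hg : ∀ ω, g ω = k (f ω)) (hf : ∀ ω, f ω = k' (g ω)) :
    ent μ f = ent μ g := by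
  have hfiber : ∀ ω ω', f ω' = f ω ↔ g ω' = g ω := fun ω ω' =>
    ⟨fun h => by rw [hg, hg, h], fun h => by rw [hf, hf ω, h]⟩
  simp only [ent_eq_neg_sum, prob, hfiber]

lemma ent_const (hμ1 : ∑ ω, μ ω = 1) [Fintype α] (c : α) : ent μ (fun _ => c) = 0 := by
  simp [ent_eq_neg_sum, prob, hμ1]

lemma ent_comp_le (hμ0 : ∀ ω, 0 ≤ μ ω) [Fintype α] [Fintype β] (f : Ω → α) (k : α → β) :
    ent μ (fun ω => k (f ω)) ≤ ent μ f := by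
  rw [ent_eq_neg_sum, ent_eq_neg_sum, neg_le_neg_iff]
  refine sum_le_sum fun ω _ => ?_
  rcases (hμ0 ω).eq_or_lt with h0 | h0
  · simp [← h0]
  · exact mul_le_mul_of_nonneg_left (logb_le_logb_of_le one_lt_two
      (h0.trans_le (le_prob_apply hμ0 f ω)) (prob_le_prob_comp hμ0 f k (f ω))) h0.le

lemma ent_le_logb_card (hμ0 : ∀ ω, 0 ≤ μ ω) (hμ1 : ∑ ω, μ ω = 1) [Fintype α] [Nonempty α]
    (f : Ω → α) : ent μ f ≤ logb 2 (Fintype.card α) := by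
  have hn : (0 : ℝ) < Fintype.card α := by exact_mod_cast Fintype.card_pos
  have h := sum_mul_logb_le_sum_mul_logb (prob_nonneg hμ0 f) (sum_prob hμ1 f)
    (r := fun _ => (Fintype.card α : ℝ)⁻¹) (fun _ => by positivity)
    (by simp [hn.ne']) (fun _ _ => by positivity)
  rw [← sum_mul, sum_prob hμ1 f, one_mul, logb_inv] at h
  simpa [ent, sum_neg_distrib] using neg_le_neg h

lemma sum_prob_prod_left [Fintype α] (f : Ω → α) (h : Ω → γ) (c : γ) :
    ∑ a, prob μ (fun ω => (f ω, h ω)) (a, c) = prob μ h c := by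
  simp only [prob, Prod.mk.injEq]
  rw [sum_comm]
  simp [ite_and]

section Submodularity

variable [Fintype α] [Fintype β] [Fintype γ] (f : Ω → α) (g : Ω → β) (h : Ω → γ)

lemma sum_prob_mul_prob_div_prob_le_one (hμ1 : ∑ ω, μ ω = 1) :
    ∑ x : α × β × γ, prob μ (fun ω => (f ω, h ω)) (x.1, x.2.2) *
      prob μ (fun ω => (g ω, h ω)) (x.2.1, x.2.2) / prob μ h x.2.2 ≤ 1 := by
  have hsplit : ∑ x : α × β × γ, prob μ (fun ω => (f ω, h ω)) (x.1, x.2.2) *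
      prob μ (fun ω => (g ω, h ω)) (x.2.1, x.2.2) / prob μ h x.2.2 =
      ∑ c, (∑ a, prob μ (fun ω => (f ω, h ω)) (a, c)) *
        (∑ b, prob μ (fun ω => (g ω, h ω)) (b, c)) / prob μ h c := by
    simp only [Fintype.sum_prod_type, sum_mul_sum, sum_div]
    exact (sum_congr rfl fun _ _ => sum_comm).trans sum_comm
  rw [hsplit]
  simp only [sum_prob_prod_left, mul_self_div_self, sum_prob hμ1, le_refl]

lemma sum_mul_logb_prob_mul_prob_div_prob (hμ0 : ∀ ω, 0 ≤ μ ω) :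
    ∑ ω, μ ω * logb 2 (prob μ (fun ω => (f ω, h ω)) (f ω, h ω) *
      prob μ (fun ω => (g ω, h ω)) (g ω, h ω) / prob μ h (h ω)) =
      ent μ h - ent μ (fun ω => (f ω, h ω)) - ent μ (fun ω => (g ω, h ω)) := by
  simp only [ent_eq_neg_sum]
  rw [neg_sub_neg, sub_neg_eq_add, ← sum_sub_distrib, ← sum_add_distrib]
  refine sum_congr rfl fun ω _ => ?_
  rcases (hμ0 ω).eq_or_lt with h0 | h0
  · simp [← h0]
  · have hfh := (h0.trans_le (le_prob_apply hμ0 (fun ω => (f ω, h ω)) ω)).ne'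
    have hgh := (h0.trans_le (le_prob_apply hμ0 (fun ω => (g ω, h ω)) ω)).ne'
    have hh := (h0.trans_le (le_prob_apply hμ0 h ω)).ne'
    rw [logb_div (mul_ne_zero hfh hgh) hh, logb_mul hfh hgh]
    ring

lemma ent_triple_add_ent_le (hμ0 : ∀ ω, 0 ≤ μ ω) (hμ1 : ∑ ω, μ ω = 1) :
    ent μ (fun ω => (f ω, g ω, h ω)) + ent μ h ≤
      ent μ (fun ω => (f ω, h ω)) + ent μ (fun ω => (g ω, h ω)) := by
  -- Gibbs' inequality against `p(a, c) p(b, c) / p(c)`, the law `(f, g, h)` would have if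
  -- `f` and `g` were conditionally independent given `h`.
  have hpos (x : α × β × γ) (hx : 0 < prob μ (fun ω => (f ω, g ω, h ω)) x) :
      0 < prob μ (fun ω => (f ω, h ω)) (x.1, x.2.2) *
        prob μ (fun ω => (g ω, h ω)) (x.2.1, x.2.2) / prob μ h x.2.2 := by
    have hfh := prob_le_prob_comp hμ0 (fun ω => (f ω, g ω, h ω))
      (fun x : α × β × γ => (x.1, x.2.2)) x
    have hgh := prob_le_prob_comp hμ0 (fun ω => (f ω, g ω, h ω))
      (fun x : α × β × γ => (x.2.1, x.2.2)) x
    have hh := prob_le_prob_comp hμ0 (fun ω => (f ω, g ω, h ω))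
      (fun x : α × β × γ => x.2.2) x
    exact div_pos (mul_pos (hx.trans_le hfh) (hx.trans_le hgh)) (hx.trans_le hh)
  have hgibbs := sum_mul_logb_le_sum_mul_logb (prob_nonneg hμ0 _) (sum_prob hμ1 _)
    (fun x => div_nonneg (mul_nonneg (prob_nonneg hμ0 _ _) (prob_nonneg hμ0 _ _))
      (prob_nonneg hμ0 _ _))
    (sum_prob_mul_prob_div_prob_le_one f g h hμ1) hpos
  rw [sum_prob_mul, sum_mul_logb_prob_mul_prob_div_prob f g h hμ0, sum_prob_mul] at hgibbs
  rw [ent_eq_neg_sum (fun ω => (f ω, g ω, h ω))]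
  linarith

end Submodularity

section Conditional

variable [Fintype α] [Fintype β] [Fintype γ]

lemma cmi_nonneg (hμ0 : ∀ ω, 0 ≤ μ ω) (hμ1 : ∑ ω, μ ω = 1) (f : Ω → α) (g : Ω → β)
    (h : Ω → γ) : 0 ≤ cmi μ f g h := by
  have := ent_triple_add_ent_le f g h hμ0 hμ1
  simp only [cmi, condEnt]
  linarith

lemma condEnt_nonneg (hμ0 : ∀ ω, 0 ≤ μ ω) (f : Ω → α) (g : Ω → β) : 0 ≤ condEnt μ f g :=
  sub_nonneg.mpr (ent_comp_le hμ0 (fun ω => (f ω, g ω)) Prod.snd)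

lemma condEnt_const (hμ1 : ∑ ω, μ ω = 1) (f : Ω → α) (c : β) :
    condEnt μ f (fun _ => c) = ent μ f := by
  rw [condEnt, ent_const hμ1, sub_zero,
    ent_eq_of_comp_of_comp Prod.fst (·, c) (fun _ => rfl) (fun _ => rfl)]

lemma condEnt_le_condEnt_comp (hμ0 : ∀ ω, 0 ≤ μ ω) (hμ1 : ∑ ω, μ ω = 1) (f : Ω → α)
    (g : Ω → β) (k : β → γ) : condEnt μ f g ≤ condEnt μ f (fun ω => k (g ω)) := by
  have hsub := ent_triple_add_ent_le f g (fun ω => k (g ω)) hμ0 hμ1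
  rw [ent_eq_of_comp_of_comp (f := fun ω => (f ω, g ω, k (g ω))) (g := fun ω => (f ω, g ω))
      (fun x => (x.1, x.2.1)) (fun x => (x.1, x.2, k x.2)) (fun _ => rfl) (fun _ => rfl),
    ent_eq_of_comp_of_comp (f := fun ω => (g ω, k (g ω))) (g := g)
      Prod.fst (fun y => (y, k y)) (fun _ => rfl) (fun _ => rfl)] at hsub
  simp only [condEnt]
  linarith

lemma cmi_sub_cmi_comm {δ : Type*} [Fintype δ] (f : Ω → α) (g : Ω → β) (h : Ω → γ)
    (s : Ω → δ) :
    cmi μ f g h - cmi μ f g (fun ω => (h ω, s ω)) =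
      cmi μ s g h - cmi μ s g (fun ω => (f ω, h ω)) := by
  -- the chain rule for `I(f, s; g | h)`, expanded in both orders
  have e₁ : ent μ (fun ω => (f ω, g ω, h ω)) = ent μ (fun ω => (g ω, f ω, h ω)) :=
    ent_eq_of_comp_of_comp (fun x => (x.2.1, x.1, x.2.2)) (fun x => (x.2.1, x.1, x.2.2))
      (fun _ => rfl) (fun _ => rfl)
  have e₂ : ent μ (fun ω => (f ω, h ω, s ω)) = ent μ (fun ω => (s ω, f ω, h ω)) :=
    ent_eq_of_comp_of_comp (fun x => (x.2.2, x.1, x.2.1)) (fun x => (x.2.1, x.2.2, x.1))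
      (fun _ => rfl) (fun _ => rfl)
  have e₃ : ent μ (fun ω => (h ω, s ω)) = ent μ (fun ω => (s ω, h ω)) :=
    ent_eq_of_comp_of_comp Prod.swap Prod.swap (fun _ => rfl) (fun _ => rfl)
  have e₄ : ent μ (fun ω => (f ω, g ω, h ω, s ω)) = ent μ (fun ω => (s ω, g ω, f ω, h ω)) :=
    ent_eq_of_comp_of_comp (fun x => (x.2.2.2, x.2.1, x.1, x.2.2.1))
      (fun x => (x.2.2.1, x.2.1, x.2.2.2, x.1)) (fun _ => rfl) (fun _ => rfl)
  have e₅ : ent μ (fun ω => (g ω, h ω, s ω)) = ent μ (fun ω => (s ω, g ω, h ω)) :=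
    ent_eq_of_comp_of_comp (fun x => (x.2.2, x.1, x.2.1)) (fun x => (x.2.1, x.2.2, x.1))
      (fun _ => rfl) (fun _ => rfl)
  simp only [cmi, condEnt]
  linarith

lemma cmi_le_condEnt_sub_condEnt {δ ε : Type*} [Fintype δ] [Fintype ε]
    (hμ0 : ∀ ω, 0 ≤ μ ω) (hμ1 : ∑ ω, μ ω = 1) (f : Ω → α) (g : Ω → β) (h : Ω → γ)
    {a : Ω → δ} {b : Ω → ε} (k : γ → δ) (k' : ε → β × γ) (ha : ∀ ω, a ω = k (h ω))
    (hb : ∀ ω, (g ω, h ω) = k' (b ω)) :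
    cmi μ f g h ≤ condEnt μ f a - condEnt μ f b := by
  have hh := condEnt_le_condEnt_comp hμ0 hμ1 f h k
  have hgh := condEnt_le_condEnt_comp hμ0 hμ1 f b k'
  rw [← funext ha] at hh
  rw [← funext hb] at hgh
  rw [cmi]
  linarith

lemma sum_cmi_le_ent {δ : Type*} [Fintype δ] {N : ℕ} (hμ0 : ∀ ω, 0 ≤ μ ω)
    (hμ1 : ∑ ω, μ ω = 1) (f : Ω → α) (g : Fin N → Ω → β) (h : Fin N → Ω → γ)
    (V : ℕ → Ω → δ) (c : δ) (hV₀ : V 0 = fun _ => c)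
    (hV : ∀ i : Fin N, cmi μ f (g i) (h i) ≤ condEnt μ f (V i) - condEnt μ f (V (i + 1))) :
    ∑ i, cmi μ f (g i) (h i) ≤ ent μ f :=
  calc ∑ i, cmi μ f (g i) (h i)
      ≤ ∑ i : Fin N, (condEnt μ f (V i) - condEnt μ f (V (i + 1))) := sum_le_sum fun i _ => hV i
    _ = condEnt μ f (V 0) - condEnt μ f (V N) := by
      rw [Fin.sum_univ_eq_sum_range (fun k => condEnt μ f (V k) - condEnt μ f (V (k + 1))),
        sum_range_sub']
    _ ≤ ent μ f := by
      rw [hV₀, condEnt_const hμ1]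
      linarith [condEnt_nonneg hμ0 f (V N)]

end Conditional

end Entropy

section Prefixes

variable {Ω 𝒰 𝒴 𝒵 𝒮 : Type*} {N : ℕ}

/-- `Z^k`, the first `k` coordinates; unlike `prefixLT` it is indexed by `ℕ`, so it reaches
`k = N`. -/
def prefixLen (Z : Ω → Fin N → 𝒵) (k : ℕ) : Ω → Fin N → Option 𝒵 :=
  fun ω j => if (j : ℕ) < k then some (Z ω j) else none

variable [Fintype Ω] [Nonempty Ω] [Fintype 𝒰] [Fintype 𝒴] [Fintype 𝒮] {μ : Ω → ℝ}
  (S : Ω → 𝒮) (U : Ω → Fin N → 𝒰) (Y : Ω → Fin N → 𝒴) (i : Fin N)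

lemma cmi_prefixLT_le (hμ0 : ∀ ω, 0 ≤ μ ω) (hμ1 : ∑ ω, μ ω = 1) :
    cmi μ S (fun ω => Y ω i) (prefixLT Y i) ≤
      condEnt μ S (prefixLen Y i) - condEnt μ S (prefixLen Y (i + 1)) := by
  obtain ⟨ω₀⟩ := ‹Nonempty Ω›
  refine cmi_le_condEnt_sub_condEnt hμ0 hμ1 S _ _ id
    (fun b => ((b i).getD (Y ω₀ i), fun j => if j < i then b j else none))
    (fun _ => rfl) fun ω => ?_
  ext j
  · simp [prefixLen]
  · simp only [prefixLT, prefixLen]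
    split_ifs <;> first | rfl | omega

lemma cmi_prefixIncl_le (hμ0 : ∀ ω, 0 ≤ μ ω) (hμ1 : ∑ ω, μ ω = 1) :
    cmi μ S (fun ω => Y ω i) (fun ω => (prefixIncl U i ω, prefixLT Y i ω)) ≤
      condEnt μ S (prefixLen (fun ω j => (U ω j, Y ω j)) i) -
        condEnt μ S (prefixLen (fun ω j => (U ω j, Y ω j)) (i + 1)) := by
  obtain ⟨ω₀⟩ := ‹Nonempty Ω›
  refine cmi_le_condEnt_sub_condEnt hμ0 hμ1 S _ _
    (fun p j => Option.map₂ Prod.mk (p.1 j) (p.2 j))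
    (fun b => (((b i).map Prod.snd).getD (Y ω₀ i),
      fun j => (b j).map Prod.fst, fun j => if j < i then (b j).map Prod.snd else none))
    (fun ω => ?_) fun ω => ?_
  · ext j
    simp only [prefixLen, prefixIncl, prefixLT]
    split_ifs <;> simp_all; omega
  · ext j
    · simp [prefixLen]
    · simp only [prefixIncl, prefixLen]
      split_ifs <;> simp_all; omega
    · simp only [prefixLT, prefixLen]
      split_ifs <;> simp_all; omega

end Prefixes

lemma dirInfo_sub_dirInfoCond {Ω 𝒰 𝒴 𝒮 : Type*} [Fintype Ω] [Fintype 𝒰] [Fintype 𝒴]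
    [Fintype 𝒮] {N : ℕ} (μ : Ω → ℝ) (U : Ω → Fin N → 𝒰) (Y : Ω → Fin N → 𝒴) (S : Ω → 𝒮) :
    dirInfo μ U Y - dirInfoCond μ U Y S =
      ∑ i, cmi μ S (fun ω => Y ω i) (prefixLT Y i) -
        ∑ i, cmi μ S (fun ω => Y ω i) (fun ω => (prefixIncl U i ω, prefixLT Y i ω)) := by
  rw [dirInfo, dirInfoCond, ← sum_sub_distrib, ← sum_sub_distrib]
  exact sum_congr rfl fun i _ => cmi_sub_cmi_comm _ _ _ _

theorem abs_dirInfo_sub_dirInfoCond_le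
    {Ω 𝒰 𝒴 𝒮 : Type*} [Fintype Ω] [Fintype 𝒰] [Fintype 𝒴] [Fintype 𝒮]
    {N : ℕ}
    (μ : Ω → ℝ) (hμ0 : ∀ ω, 0 ≤ μ ω) (hμ1 : ∑ ω : Ω, μ ω = 1)
    (U : Ω → Fin N → 𝒰) (Y : Ω → Fin N → 𝒴) (S₀ : Ω → 𝒮) :
    |dirInfo μ U Y - dirInfoCond μ U Y S₀| ≤ Real.logb 2 (Fintype.card 𝒮) := by
  have : Nonempty Ω := univ_nonempty_iff.mp (nonempty_of_sum_ne_zero (hμ1 ▸ one_ne_zero))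
  have : Nonempty 𝒮 := .map S₀ ‹_›
  have hY := sum_cmi_le_ent hμ0 hμ1 S₀ _ _ (prefixLen Y) (fun _ => none) rfl
    (cmi_prefixLT_le S₀ Y · hμ0 hμ1)
  have hUY := sum_cmi_le_ent hμ0 hμ1 S₀ _ _ (prefixLen fun ω j => (U ω j, Y ω j))
    (fun _ => none) rfl (cmi_prefixIncl_le S₀ U Y · hμ0 hμ1)
  have hY₀ := sum_nonneg fun i (_ : i ∈ univ) =>
    cmi_nonneg hμ0 hμ1 S₀ (fun ω => Y ω i) (prefixLT Y i)
  have hUY₀ := sum_nonneg fun i (_ : i ∈ univ) =>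
    cmi_nonneg hμ0 hμ1 S₀ (fun ω => Y ω i) fun ω => (prefixIncl U i ω, prefixLT Y i ω)
  have hS := ent_le_logb_card hμ0 hμ1 S₀
  rw [dirInfo_sub_dirInfoCond, abs_sub_le_iff]
  constructor <;> linarith
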